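/- Let a, b, c ∈ ℝ and define, for real x > 1 and λ < 0, F(x, λ) = x^{−a}(x − 1)^{−b}(x − λ)^{−c} and h(x, λ) = x^{1−a}(x − 1)^{1−b}(x − λ)^{−1−c} (real powers of positive reals). Then the identity λ(1 − λ)·∂²F/∂λ² + (a + c − λ(a + b + 2c))·∂F/∂λ − c(a + b + c − 1)·F = c·∂h/∂x holds on this region. -/

import Mathlib

/-!
Both sides are multiples of `E = x^{-a} (x - 1)^{-b} (x - λ)^{-c-2}`. Differentiating in `λ` only
touches the factor `(x - λ)^{-c}`, so `F = (x - λ)² E`, `F_λ = c (x - λ) E`, `F_λλ = c (c + 1) E`,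
while the logarithmic derivative of `h` gives
`h_x = E ((1 - a)(x - 1)(x - λ) + (1 - b) x (x - λ) - (1 + c) x (x - 1))`.
After dividing by `E` the identity is a polynomial identity in `x` and `λ`.
-/

open Filter

noncomputable def eulerIntegrand (α β γ l t : ℝ) : ℝ :=
  t ^ α * (t - 1) ^ β * (t - l) ^ γ

section EulerIntegrand

variable {α β γ l x : ℝ}

theorem eulerIntegrand_mul_sub (hxl : x ≠ l) :
    eulerIntegrand α β γ l x * (x - l) = eulerIntegrand α β (γ + 1) l x := by
  simp only [eulerIntegrand, Real.rpow_add_one (sub_ne_zero.mpr hxl)]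
  ring

theorem hasDerivAt_eulerIntegrand (hx0 : x ≠ 0) (hx1 : x ≠ 1) (hxl : x ≠ l) :
    HasDerivAt (eulerIntegrand α β γ l)
      (eulerIntegrand (α - 1) (β - 1) (γ - 1) l x *
        (α * (x - 1) * (x - l) + β * x * (x - l) + γ * x * (x - 1))) x := by
  have hx1' : x - 1 ≠ 0 := sub_ne_zero.mpr hx1
  have hxl' : x - l ≠ 0 := sub_ne_zero.mpr hxl
  have hu := Real.hasDerivAt_rpow_const (p := α) (Or.inl hx0)
  have hv := ((hasDerivAt_id x).sub_const 1).rpow_const (p := β) (Or.inl hx1')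
  have hw := ((hasDerivAt_id x).sub_const l).rpow_const (p := γ) (Or.inl hxl')
  refine ((hu.mul hv).mul hw).congr_deriv ?_
  simp only [eulerIntegrand, id, Pi.mul_apply, Real.rpow_sub_one hx0, Real.rpow_sub_one hx1',
    Real.rpow_sub_one hxl']
  field_simp

theorem hasDerivAt_eulerIntegrand_param (hlx : l ≠ x) :
    HasDerivAt (fun s => eulerIntegrand α β γ s x) (-γ * eulerIntegrand α β (γ - 1) l x) l := by
  have hw := ((hasDerivAt_id l).const_sub x).rpow_const (p := γ) (Or.inl (sub_ne_zero.mpr hlx.symm))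
  refine (hw.const_mul (x ^ α * (x - 1) ^ β)).congr_deriv ?_
  simp only [eulerIntegrand, id]
  ring

theorem deriv_deriv_eulerIntegrand_param (hlx : l ≠ x) :
    deriv (deriv fun s => eulerIntegrand α β γ s x) l
      = γ * (γ - 1) * eulerIntegrand α β (γ - 2) l x := by
  have hfirst : deriv (fun s => eulerIntegrand α β γ s x)
      =ᶠ[nhds l] fun s => -γ * eulerIntegrand α β (γ - 1) s x := by
    filter_upwards [eventually_ne_nhds hlx] with s hs
    exact (hasDerivAt_eulerIntegrand_param hs).deriv
  rw [hfirst.deriv_eq, ((hasDerivAt_eulerIntegrand_param hlx).const_mul (-γ)).deriv,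
    sub_sub, one_add_one_eq_two]
  ring

end EulerIntegrand

/-- With `F(x, λ) = x^{−a}(x − 1)^{−b}(x − λ)^{−c}` and
`h(x, λ) = x^{1−a}(x − 1)^{1−b}(x − λ)^{−1−c}` (real powers, `x > 1`, `λ < 0`),
the hypergeometric identity
`λ(1 − λ)·F_{λλ} + (a + c − λ(a + b + 2c))·F_λ − c(a + b + c − 1)·F = c·∂h/∂x`
holds. -/
theorem stmt_14 (a b c : ℝ)
    (F h : ℝ → ℝ → ℝ)
    (hF : ∀ x l : ℝ, F x l = x ^ (-a) * (x - 1) ^ (-b) * (x - l) ^ (-c))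
    (hh : ∀ x l : ℝ, h x l = x ^ (1 - a) * (x - 1) ^ (1 - b) * (x - l) ^ (-1 - c))
    (x lam : ℝ) (hx : 1 < x) (hlam : lam < 0) :
    lam * (1 - lam) * deriv (fun t : ℝ => deriv (fun s : ℝ => F x s) t) lam
      + (a + c - lam * (a + b + 2 * c)) * deriv (fun s : ℝ => F x s) lam
      - c * (a + b + c - 1) * F x lam
    = c * deriv (fun t : ℝ => h t lam) x := by
  have hxl : x ≠ lam := by linarith
  have hFx : (fun s => F x s) = fun s => eulerIntegrand (-a) (-b) (-c) s x := funext (hF x)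
  have hht : (fun t => h t lam) = eulerIntegrand (1 - a) (1 - b) (-1 - c) lam :=
    funext fun t => hh t lam
  have hE1 : eulerIntegrand (-a) (-b) (-c - 1) lam x
      = eulerIntegrand (-a) (-b) (-c - 2) lam x * (x - lam) := by
    rw [eulerIntegrand_mul_sub hxl]; ring_nf
  have hF0 : F x lam = eulerIntegrand (-a) (-b) (-c - 2) lam x * (x - lam) * (x - lam) := by
    rw [eulerIntegrand_mul_sub hxl, eulerIntegrand_mul_sub hxl, hF,
      show (-c - 2 + 1 + 1 : ℝ) = -c by ring]
    rfl
  have hFl := (hasDerivAt_eulerIntegrand_param (α := -a) (β := -b) (γ := -c) hxl.symm).deriv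
  have hFll := deriv_deriv_eulerIntegrand_param (α := -a) (β := -b) (γ := -c) hxl.symm
  have hhx := (hasDerivAt_eulerIntegrand (α := 1 - a) (β := 1 - b) (γ := -1 - c)
    (by linarith) hx.ne' hxl).deriv
  simp only [show (1 - a - 1 : ℝ) = -a by ring, show (1 - b - 1 : ℝ) = -b by ring,
    show (-1 - c - 1 : ℝ) = -c - 2 by ring] at hhx
  rw [hFx, hht, hFll, hFl, hhx, hE1, hF0]
  ring
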